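/- For every real λ > 0 and every positive integer K, the limit as n → ∞ of the sum Σ_{ℓ=K}^{n−2} (K/(ℓ+1)) · C(n−2, ℓ) · (λ/n)^ℓ · (1 − λ/n)^{n−ℓ−2} exists and equals (K/λ)·(1 − e^{−λ}·Σ_{k=0}^{K} λ^k/k!). -/

import Mathlib

/-!
The summand is `K / (ℓ + 1)` times the binomial probability `P(Bin(n - 2, λ/n) = ℓ)`, which tends
to the Poisson weight `e^{-λ} λ^ℓ / ℓ!`; since `C(n - 2, ℓ) (λ/n)^ℓ ≤ λ^ℓ / ℓ!` for `n ≥ λ`, the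
summands are dominated by the summable sequence `K λ^ℓ / ℓ!` and dominated convergence (Tannery)
applies. In the limit, `K / (ℓ + 1) · λ^ℓ / ℓ! = (K / λ) · λ^(ℓ+1) / (ℓ+1)!`, so the sum over
`ℓ ≥ K` is `(K / λ)` times the tail of the exponential series beyond degree `K`.
-/

open Filter Finset Topology Nat

lemma tendsto_choose_sub_mul_div_pow (x : ℝ) (c l : ℕ) :
    Tendsto (fun n : ℕ => ((n - c).choose l : ℝ) * (x / n) ^ l * (1 - x / n) ^ (n - l - c))
      atTop (𝓝 (Real.exp (-x) * x ^ l / l !)) := by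
  have hmul : Tendsto (fun m : ℕ => (m : ℝ) * (x / ((m + c : ℕ) : ℝ))) atTop (𝓝 x) := by
    have := (tendsto_natCast_div_add_atTop (c : ℝ)).mul_const x
    rw [one_mul] at this
    refine this.congr fun m => ?_
    push_cast
    ring
  refine ((ProbabilityTheory.tendsto_choose_mul_pow_of_tendsto_mul_atTop l hmul).comp
    (tendsto_sub_atTop_nat c)).congr' ?_
  filter_upwards [eventually_ge_atTop c] with n hn
  simp only [Function.comp_apply, Nat.sub_add_cancel hn, Nat.sub_right_comm n l c]

lemma choose_mul_div_pow_le_pow_div_factorial {x : ℝ} (hx : 0 ≤ x) {m n : ℕ} (hmn : m ≤ n)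
    (l : ℕ) : (m.choose l : ℝ) * (x / n) ^ l ≤ x ^ l / l ! := by
  have hxn : (n : ℝ) * (x / n) ≤ x := by
    rcases eq_or_ne (n : ℝ) 0 with h | h
    · simp [h, hx]
    · rw [mul_div_cancel₀ _ h]
  calc (m.choose l : ℝ) * (x / n) ^ l ≤ (n : ℝ) ^ l / l ! * (x / n) ^ l := by
        gcongr
        exact (Nat.choose_le_pow_div l m).trans (by gcongr)
    _ = ((n : ℝ) * (x / n)) ^ l / l ! := by ring
    _ ≤ x ^ l / l ! := by gcongr

lemma hasSum_pow_div_factorial_nat_add (x : ℝ) (N : ℕ) :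
    HasSum (fun m => x ^ (m + N) / (m + N) !)
      (Real.exp x - ∑ k ∈ range N, x ^ k / k !) :=
  (hasSum_nat_add_iff' N).mpr <| by
    simpa only [Real.exp_eq_exp_ℝ] using NormedSpace.expSeries_div_hasSum_exp x

noncomputable def tailSummand (x : ℝ) (K n l : ℕ) : ℝ :=
  (K : ℝ) / (l + 1) * ((n - 2).choose l : ℝ) * (x / n) ^ l * (1 - x / n) ^ (n - l - 2)

noncomputable def poissonTailSummand (x : ℝ) (K l : ℕ) : ℝ :=
  (K : ℝ) / (l + 1) * (Real.exp (-x) * x ^ l / l !)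

lemma tendsto_tailSummand (x : ℝ) (K l : ℕ) :
    Tendsto (fun n => tailSummand x K n l) atTop (𝓝 (poissonTailSummand x K l)) := by
  simpa only [tailSummand, poissonTailSummand, mul_assoc] using
    (tendsto_choose_sub_mul_div_pow x 2 l).const_mul ((K : ℝ) / (l + 1))

lemma norm_tailSummand_le {x : ℝ} (hx : 0 ≤ x) {n : ℕ} (hxn : x ≤ n) (K l : ℕ) :
    ‖tailSummand x K n l‖ ≤ K * (x ^ l / l !) := by
  have hq : 0 ≤ x / n := by positivity
  have hq1 : x / n ≤ 1 := div_le_one_of_le₀ hxn n.cast_nonneg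
  have hK : (K : ℝ) / (l + 1) ≤ K := div_le_self K.cast_nonneg (by simp)
  have hq1' : 0 ≤ 1 - x / n := sub_nonneg.2 hq1
  rw [Real.norm_eq_abs, abs_of_nonneg (by unfold tailSummand; positivity), tailSummand,
    mul_assoc, mul_assoc]
  gcongr
  calc ((n - 2).choose l : ℝ) * ((x / n) ^ l * (1 - x / n) ^ (n - l - 2))
      ≤ ((n - 2).choose l : ℝ) * (x / n) ^ l * 1 := by
        rw [← mul_assoc]
        gcongr
        exact pow_le_one₀ hq1' (by linarith)
    _ ≤ x ^ l / l ! := by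
        rw [mul_one]
        exact choose_mul_div_pow_le_pow_div_factorial hx (n.sub_le 2) l

lemma hasSum_indicator_poissonTailSummand {x : ℝ} (hx : x ≠ 0) (K : ℕ) :
    HasSum ((Set.Ici K).indicator (poissonTailSummand x K))
      ((K : ℝ) / x * (1 - Real.exp (-x) * ∑ k ∈ range (K + 1), x ^ k / k !)) := by
  have hshift (m : ℕ) : (Set.Ici K).indicator (poissonTailSummand x K) (m + K) =
      K * Real.exp (-x) / x * (x ^ (m + (K + 1)) / (m + (K + 1)) !) := by
    rw [Set.indicator_of_mem (by simp), poissonTailSummand, ← add_assoc, factorial_succ, pow_succ]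
    push_cast
    field_simp
  have hhead : ∑ i ∈ range K, (Set.Ici K).indicator (poissonTailSummand x K) i = 0 :=
    sum_eq_zero fun i hi => Set.indicator_of_notMem (by simpa using hi) _
  have hvalue : (K : ℝ) / x * (1 - Real.exp (-x) * ∑ k ∈ range (K + 1), x ^ k / k !) =
      K * Real.exp (-x) / x * (Real.exp x - ∑ k ∈ range (K + 1), x ^ k / k !) := by
    rw [Real.exp_neg]
    field_simp
  rw [← hasSum_nat_add_iff' K, hhead, sub_zero, hvalue]
  simpa only [hshift] using
    (hasSum_pow_div_factorial_nat_add x (K + 1)).mul_left (K * Real.exp (-x) / x)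

lemma tendsto_indicator_tailSummand (x : ℝ) (K l : ℕ) :
    Tendsto (fun n => (Set.Icc K (n - 2)).indicator (tailSummand x K n) l)
      atTop (𝓝 ((Set.Ici K).indicator (poissonTailSummand x K) l)) := by
  by_cases hKl : K ≤ l
  · rw [Set.indicator_of_mem (Set.mem_Ici.mpr hKl)]
    refine (tendsto_tailSummand x K l).congr' ?_
    filter_upwards [eventually_ge_atTop (l + 2)] with n hn
    exact (Set.indicator_of_mem (Set.mem_Icc.mpr ⟨hKl, by omega⟩) _).symm
  · simp only [Set.indicator_of_notMem (fun h : l ∈ Set.Icc K _ => hKl h.1),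
      Set.indicator_of_notMem (fun h : l ∈ Set.Ici K => hKl h), tendsto_const_nhds]

theorem stmt2_general (lam : ℝ) (hlam : 0 < lam) (K : ℕ) :
    Tendsto
      (fun n : ℕ =>
        ∑ l ∈ Finset.Icc K (n - 2),
          ((K : ℝ) / (l + 1)) * ((n - 2).choose l : ℝ) * (lam / n) ^ l *
            (1 - lam / n) ^ (n - l - 2))
      atTop
      (nhds (((K : ℝ) / lam) *
        (1 - Real.exp (-lam) * ∑ k ∈ Finset.range (K + 1), lam ^ k / (Nat.factorial k)))) := by
  have hbound : ∀ᶠ n : ℕ in atTop, ∀ l,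
      ‖(Set.Icc K (n - 2)).indicator (tailSummand lam K n) l‖ ≤ K * (lam ^ l / l !) := by
    filter_upwards [eventually_ge_atTop ⌈lam⌉₊] with n hn l
    exact (norm_indicator_le_norm_self _ _).trans
      (norm_tailSummand_le hlam.le (Nat.ceil_le.mp hn) K l)
  rw [← (hasSum_indicator_poissonTailSummand hlam.ne' K).tsum_eq]
  refine (tendsto_tsum_of_dominated_convergence
    ((Real.summable_pow_div_factorial lam).mul_left (K : ℝ))
    (tendsto_indicator_tailSummand lam K) hbound).congr fun n => ?_
  rw [sum_eq_tsum_indicator, coe_Icc]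
  rfl

/-- The limit as `n → ∞` of the tail sum
`Σ_{ℓ=K}^{n−2} (K/(ℓ+1)) · C(n−2, ℓ) · (λ/n)^ℓ · (1 − λ/n)^{n−ℓ−2}`
exists and equals `(K/λ)·(1 − e^{−λ}·Σ_{k=0}^{K} λ^k/k!)`. -/
theorem stmt2 (lam : ℝ) (hlam : 0 < lam) (K : ℕ) (hK : 0 < K) :
    Tendsto
      (fun n : ℕ =>
        ∑ l ∈ Finset.Icc K (n - 2),
          ((K : ℝ) / (l + 1)) * ((n - 2).choose l : ℝ) * (lam / n) ^ l *
            (1 - lam / n) ^ (n - l - 2))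
      atTop
      (nhds (((K : ℝ) / lam) *
        (1 - Real.exp (-lam) * ∑ k ∈ Finset.range (K + 1), lam ^ k / (Nat.factorial k)))) :=
  stmt2_general lam hlam K
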